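/- Quasi-norm comparison, singular range: let σ > 1 and p ∈ (1, σ]. There exists a constant C > 0 depending only on p and σ such that for every measure space (D, μ) and all measurable real-valued f, g on D with ‖f‖_{L^p(μ)} < ∞ and ‖g‖_{L^p(μ)} < ∞, one has |f|_{g,p,σ}^{σ/p} ≤ ‖f‖_{L^p(μ)}^σ ≤ C (‖f‖_{L^p(μ)} + ‖g‖_{L^p(μ)})^{σ−p} |f|_{g,p,σ}. -/

import Mathlib

open MeasureTheory

/-- The quasi-norm quantity `|f|_{g,p,σ} = ∫_D (|f| + |g|)^{p−σ} |f|^σ dμ`, with the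
convention that the integrand is `0` wherever `f = 0`. -/
noncomputable def quasiNorm {D : Type*} [MeasurableSpace D] (μ : Measure D)
    (f g : D → ℝ) (p σ : ℝ) : ENNReal :=
  ∫⁻ x, if f x = 0 then 0
    else ENNReal.ofReal ((|f x| + |g x|) ^ (p - σ) * |f x| ^ σ) ∂μ

/-- The `L^p` norm `(∫_D |f|^p dμ)^{1/p}` as a value in `[0, ∞]`. -/
noncomputable def lpNorm {D : Type*} [MeasurableSpace D] (μ : Measure D)
    (f : D → ℝ) (p : ℝ) : ENNReal :=
  (∫⁻ x, ENNReal.ofReal (|f x| ^ p) ∂μ) ^ (1 / p)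

/-! The constant is `C = 1`. Since `p ≤ σ`, pointwise `(|f| + |g|)^{p-σ} |f|^σ ≤ |f|^p`,
which gives the first inequality. For the second, split
`|f|^p = ((|f| + |g|)^{p-σ} |f|^σ)^{p/σ} · ((|f| + |g|)^p)^{(σ-p)/σ}` and apply Hölder's
inequality with the exponents `σ/p` and `σ/(σ-p)` (the case `p = σ` is the degenerate one
where the second factor is `1`); Minkowski's inequality then bounds `∫ (|f| + |g|)^p` by
`(‖f‖_p + ‖g‖_p)^p`. -/

namespace Real

theorem rpow_sub_mul_rpow_le_rpow {x y p σ : ℝ} (hx : 0 < x) (hxy : x ≤ y) (hpσ : p ≤ σ) :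
    y ^ (p - σ) * x ^ σ ≤ x ^ p :=
  calc y ^ (p - σ) * x ^ σ
      ≤ x ^ (p - σ) * x ^ σ := by
        have := rpow_le_rpow_of_nonpos hx hxy (sub_nonpos.mpr hpσ)
        gcongr
    _ = x ^ p := by rw [← rpow_add hx, sub_add_cancel]

theorem rpow_sub_mul_rpow_rpow_mul_rpow_rpow {x y : ℝ} (p : ℝ) {σ : ℝ} (hx : 0 ≤ x) (hy : 0 < y)
    (hσ : σ ≠ 0) :
    (y ^ (p - σ) * x ^ σ) ^ (p / σ) * (y ^ p) ^ ((σ - p) / σ) = x ^ p := by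
  rw [mul_rpow (by positivity) (by positivity), ← rpow_mul hy.le, ← rpow_mul hx,
    ← rpow_mul hy.le, mul_right_comm, ← rpow_add hy]
  have hy_exp : (p - σ) * (p / σ) + p * ((σ - p) / σ) = 0 := by field_simp; ring
  rw [hy_exp, rpow_zero, one_mul, mul_div_cancel₀ p hσ]

end Real

open ENNReal

section Pointwise

variable {p σ : ℝ}

theorem quasiNorm_integrand_le (a b : ℝ) (hpσ : p ≤ σ) :
    (if a = 0 then 0 else ENNReal.ofReal ((|a| + |b|) ^ (p - σ) * |a| ^ σ)) ≤
      ENNReal.ofReal (|a| ^ p) := by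
  split_ifs with ha
  · exact zero_le
  · exact ENNReal.ofReal_le_ofReal <| Real.rpow_sub_mul_rpow_le_rpow (abs_pos.mpr ha)
      (le_add_of_nonneg_right (abs_nonneg b)) hpσ

theorem ofReal_abs_rpow_eq_integrand_rpow_mul (a b : ℝ) (hp : 0 < p) (hpσ : p ≤ σ) :
    ENNReal.ofReal (|a| ^ p) =
      (if a = 0 then 0 else ENNReal.ofReal ((|a| + |b|) ^ (p - σ) * |a| ^ σ)) ^ (p / σ) *
        ENNReal.ofReal ((|a| + |b|) ^ p) ^ ((σ - p) / σ) := by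
  have hσ : 0 < σ := hp.trans_le hpσ
  split_ifs with ha
  · rw [ha, abs_zero, Real.zero_rpow hp.ne', ofReal_zero, zero_rpow_of_pos (by positivity),
      zero_mul]
  · have hab : 0 < |a| + |b| := by positivity
    rw [ofReal_rpow_of_nonneg (by positivity) (by positivity),
      ofReal_rpow_of_nonneg (by positivity) (div_nonneg (by linarith) hσ.le),
      ← ofReal_mul (by positivity),
      Real.rpow_sub_mul_rpow_rpow_mul_rpow_rpow p (abs_nonneg a) hab hσ.ne']

end Pointwise

section Integral

variable {D : Type*} [MeasurableSpace D] {μ : Measure D} {f g : D → ℝ} {p σ : ℝ}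

theorem lpNorm_rpow (q : ℝ) :
    lpNorm μ f p ^ q = (∫⁻ x, ENNReal.ofReal (|f x| ^ p) ∂μ) ^ (q / p) := by
  rw [_root_.lpNorm, ← rpow_mul, one_div_mul_eq_div]

theorem quasiNorm_le_lintegral (hpσ : p ≤ σ) :
    quasiNorm μ f g p σ ≤ ∫⁻ x, ENNReal.ofReal (|f x| ^ p) ∂μ :=
  lintegral_mono fun x => quasiNorm_integrand_le (f x) (g x) hpσ

theorem lintegral_le_quasiNorm_rpow_mul (hf : Measurable f) (hg : Measurable g) (hp : 0 < p)
    (hpσ : p ≤ σ) :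
    ∫⁻ x, ENNReal.ofReal (|f x| ^ p) ∂μ ≤
      quasiNorm μ f g p σ ^ (p / σ) *
        (∫⁻ x, ENNReal.ofReal ((|f x| + |g x|) ^ p) ∂μ) ^ ((σ - p) / σ) := by
  have hσ : 0 < σ := hp.trans_le hpσ
  have hint_meas : Measurable fun x => if f x = 0 then 0
      else ENNReal.ofReal ((|f x| + |g x|) ^ (p - σ) * |f x| ^ σ) := by
    refine Measurable.ite (hf (measurableSet_singleton 0)) measurable_const ?_
    fun_prop
  rw [lintegral_congr fun x => ofReal_abs_rpow_eq_integrand_rpow_mul (f x) (g x) hp hpσ]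
  exact ENNReal.lintegral_mul_norm_pow_le hint_meas.aemeasurable (by fun_prop)
    (by positivity) (div_nonneg (by linarith) hσ.le) (by field_simp; ring)

theorem lintegral_abs_add_rpow_le (hf : Measurable f) (hg : Measurable g) (hp : 1 ≤ p) :
    (∫⁻ x, ENNReal.ofReal ((|f x| + |g x|) ^ p) ∂μ) ^ (1 / p) ≤ lpNorm μ f p + lpNorm μ g p := by
  have hp0 : 0 ≤ p := zero_le_one.trans hp
  have hofReal_rpow (a : ℝ) (ha : 0 ≤ a) : ENNReal.ofReal (a ^ p) = ENNReal.ofReal a ^ p :=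
    (ofReal_rpow_of_nonneg ha hp0).symm
  simp only [_root_.lpNorm]
  rw [lintegral_congr fun x => hofReal_rpow _ (abs_nonneg (f x)),
    lintegral_congr fun x => hofReal_rpow _ (abs_nonneg (g x)),
    lintegral_congr fun x => (hofReal_rpow _ (by positivity : 0 ≤ |f x| + |g x|)).trans
      (by rw [ofReal_add (abs_nonneg _) (abs_nonneg _)])]
  exact ENNReal.lintegral_Lp_add_le (by fun_prop) (by fun_prop) hp

theorem lpNorm_rpow_le_add_rpow_mul_quasiNorm (hf : Measurable f) (hg : Measurable g)
    (hp : 1 ≤ p) (hpσ : p ≤ σ) :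
    lpNorm μ f p ^ σ ≤ (lpNorm μ f p + lpNorm μ g p) ^ (σ - p) * quasiNorm μ f g p σ := by
  have hp0 : 0 < p := zero_lt_one.trans_le hp
  have hσ : 0 < σ := hp0.trans_le hpσ
  set S := ∫⁻ x, ENNReal.ofReal ((|f x| + |g x|) ^ p) ∂μ
  calc lpNorm μ f p ^ σ
      = (∫⁻ x, ENNReal.ofReal (|f x| ^ p) ∂μ) ^ (σ / p) := lpNorm_rpow σ
    _ ≤ (quasiNorm μ f g p σ ^ (p / σ) * S ^ ((σ - p) / σ)) ^ (σ / p) := by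
        gcongr
        exact lintegral_le_quasiNorm_rpow_mul hf hg hp0 hpσ
    _ = (S ^ (1 / p)) ^ (σ - p) * quasiNorm μ f g p σ := by
        rw [mul_rpow_of_nonneg _ _ (by positivity), ← rpow_mul, ← rpow_mul, ← rpow_mul,
          mul_comm]
        congr 2 <;> field_simp
        exact rpow_one _
    _ ≤ (lpNorm μ f p + lpNorm μ g p) ^ (σ - p) * quasiNorm μ f g p σ := by
        gcongr ?_ * _
        exact rpow_le_rpow (lintegral_abs_add_rpow_le hf hg hp) (by linarith)

end Integral

theorem stmt_6.{u} (σ : ℝ) (hσ : 1 < σ) (p : ℝ) (hp : 1 < p) (hpσ : p ≤ σ) :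
    ∃ C > (0 : ℝ), ∀ (D : Type u) [MeasurableSpace D] (μ : Measure D) (f g : D → ℝ),
      Measurable f → Measurable g →
      lpNorm μ f p ≠ ⊤ → lpNorm μ g p ≠ ⊤ →
      quasiNorm μ f g p σ ^ (σ / p) ≤ lpNorm μ f p ^ σ ∧
      lpNorm μ f p ^ σ ≤
        ENNReal.ofReal C * (lpNorm μ f p + lpNorm μ g p) ^ (σ - p) *
          quasiNorm μ f g p σ := by
  refine ⟨1, one_pos, fun D _ μ f g hf hg _ _ => ⟨?_, ?_⟩⟩
  · rw [lpNorm_rpow]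
    exact rpow_le_rpow (quasiNorm_le_lintegral hpσ) (div_nonneg (by linarith) (by linarith))
  · rw [ofReal_one, one_mul]
    exact lpNorm_rpow_le_add_rpow_mul_quasiNorm hf hg hp.le hpσ
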